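/- Let u : ℝ² → ℝ, u(x₁,x₂) = (x₁+x₂)². For h > 0 and a grid point (a,b), define M = [[α, β],[β, γ]] where α = u(a−h,b)+u(a+h,b)−2u(a,b), γ = u(a,b−h)+u(a,b+h)−2u(a,b), and β = ½(u(a+h,b+h)+u(a−h,b−h)−u(a+h,b−h)−u(a−h,b+h)). Then M = h²·[[2,4],[4,2]], and M is not positive semidefinite. -/

import Mathlib

/-!
Since `u` depends only on `s = x₁ + x₂`, each entry of the stencil is a second difference of
`t ↦ t²` at `s`: `α` and `γ` with step `h`, and `2β` with step `2h` along the diagonal. Second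
differences of `t²` are exact, so `α = γ = 2h²` but `β = 4h²`, twice the true mixed term. Hence
`αγ - β² = -12h⁴ < 0`, whereas a positive semidefinite matrix has nonnegative determinant.
-/

lemma Matrix.PosSemidef.sq_le_mul_of_fin_two {a b c : ℝ} (hM : (!![a, b; b, c]).PosSemidef) :
    b ^ 2 ≤ a * c := by
  have := hM.det_nonneg
  rw [Matrix.det_fin_two_of] at this
  linarith

lemma sq_second_difference {R : Type*} [CommRing R] (s h : R) :
    (s - h) ^ 2 + (s + h) ^ 2 - 2 * s ^ 2 = 2 * h ^ 2 := by
  ring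

/-- The discrete Hessian stencil of `u(x₁,x₂) = (x₁+x₂)²` at an 8-neighbor node of a
'Union Jack' mesh equals `h² · [[2,4],[4,2]]` and is not positive semidefinite. -/
theorem unionjack_stencil_not_posSemidef
    (u : ℝ → ℝ → ℝ) (hu : ∀ x₁ x₂, u x₁ x₂ = (x₁ + x₂) ^ 2)
    (h a b : ℝ) (hh : 0 < h)
    (α β γ : ℝ)
    (hα : α = u (a - h) b + u (a + h) b - 2 * u a b)
    (hγ : γ = u a (b - h) + u a (b + h) - 2 * u a b)
    (hβ : β = (u (a + h) (b + h) + u (a - h) (b - h)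
        - u (a + h) (b - h) - u (a - h) (b + h)) / 2) :
    (Matrix.of ![![α, β], ![β, γ]]) = h ^ 2 • Matrix.of ![![(2 : ℝ), 4], ![4, 2]] ∧
      ¬ (Matrix.of ![![α, β], ![β, γ]]).PosSemidef := by
  simp only [hu] at hα hβ hγ
  have hα' : α = 2 * h ^ 2 := by
    rw [hα]; linear_combination sq_second_difference (a + b) h
  have hγ' : γ = 2 * h ^ 2 := by
    rw [hγ]; linear_combination sq_second_difference (a + b) h
  have hβ' : β = 4 * h ^ 2 := by
    rw [hβ]; linear_combination sq_second_difference (a + b) (2 * h) / 2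
  subst hα' hβ' hγ'
  refine ⟨?_, fun hM ↦ ?_⟩
  · rw [Matrix.smul_of]
    congr 1
    ext i j
    fin_cases i <;> fin_cases j <;> simp [mul_comm]
  · have := hM.sq_le_mul_of_fin_two
    nlinarith [pow_pos hh 4]
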